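/- Let g be the Lie algebra A_{4,1} and let r : g* → g be the map defined by r(ε1) = e4, r(ε2) = −e3, r(ε3) = e2, r(ε4) = −e1. Then a linear endomorphism n of g makes (r, n) an r-n structure on g if and only if there exist real numbers n1, n2, n3, n4 such that n(e1) = n1·e1, n(e2) = −n2·e1 + n3·e2, n(e3) = n4·e1 + n3·e3, and n(e4) = n4·e2 + n2·e3 + n1·e4. -/

import Mathlib

noncomputable section

open Module

variable {g : Type*} [LieRing g] [LieAlgebra ℝ g]

/-- The coadjoint operator: `(coad X α) Y = -α ⁅X, Y⁆`. -/
def coad (X : g) : Module.Dual ℝ g →ₗ[ℝ] Module.Dual ℝ g :=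
  -(LieAlgebra.ad ℝ g X).dualMap

/-- A linear map `r : g* → g` is skew-symmetric if `α (r β) = -β (r α)`. -/
def IsSkew (r : Module.Dual ℝ g →ₗ[ℝ] g) : Prop :=
  ∀ α β : Module.Dual ℝ g, α (r β) = -β (r α)

/-- The Sklyanin bracket on `g*` defined by `r`. -/
def sklyanin (r : Module.Dual ℝ g →ₗ[ℝ] g) (α β : Module.Dual ℝ g) : Module.Dual ℝ g :=
  coad (r α) β - coad (r β) α

/-- `r` is a solution of the classical Yang-Baxter equation. -/
def IsCYBE (r : Module.Dual ℝ g →ₗ[ℝ] g) : Prop :=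
  ∀ α β : Module.Dual ℝ g, r (sklyanin r α β) = ⁅r α, r β⁆

/-- `n : g → g` is a Nijenhuis operator. -/
def IsNijenhuis (n : g →ₗ[ℝ] g) : Prop :=
  ∀ X Y : g, ⁅n X, n Y⁆ - n ⁅n X, Y⁆ - n ⁅X, n Y⁆ + n (n ⁅X, Y⁆) = 0

/-- `(r, n)` is an r-n structure on `g`. -/
def IsRN (r : Module.Dual ℝ g →ₗ[ℝ] g) (n : g →ₗ[ℝ] g) : Prop :=
  IsSkew r ∧ IsCYBE r ∧ IsNijenhuis n ∧
    (∀ α : Module.Dual ℝ g, n (r α) = r (n.dualMap α)) ∧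
    ∀ α β : Module.Dual ℝ g,
      coad (r α) (n.dualMap β) - coad (r β) (n.dualMap α)
        - n.dualMap (coad (r α) β) + n.dualMap (coad (r β) α) = 0

/-- The Nijenhuis concomitant of two endomorphisms. -/
def nijConcomitant (n' n : g →ₗ[ℝ] g) (X Y : g) : g :=
  ⁅n' X, n Y⁆ + ⁅n X, n' Y⁆ - n' ⁅n X, Y⁆ - n' ⁅X, n Y⁆ - n ⁅n' X, Y⁆ - n ⁅X, n' Y⁆
    + n' (n ⁅X, Y⁆) + n (n' ⁅X, Y⁆)

/-- The underlying space of the Lie algebra `A_{4,1}`: `ℝ⁴`. -/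
def A41 : Type := Fin 4 → ℝ

instance : AddCommGroup A41 := inferInstanceAs (AddCommGroup (Fin 4 → ℝ))
instance : Module ℝ A41 := inferInstanceAs (Module ℝ (Fin 4 → ℝ))

namespace A41

@[simp] theorem add_apply (x y : A41) (i : Fin 4) : (x + y) i = x i + y i := rfl
@[simp] theorem smul_apply (c : ℝ) (x : A41) (i : Fin 4) : (c • x) i = c * x i := rfl
@[simp] theorem neg_apply (x : A41) (i : Fin 4) : (-x) i = -(x i) := rfl
@[simp] theorem sub_apply (x y : A41) (i : Fin 4) : (x - y) i = x i - y i := rfl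
@[simp] theorem zero_apply (i : Fin 4) : (0 : A41) i = 0 := rfl

/-- The bracket of `A_{4,1}`: `[e2, e4] = e1`, `[e3, e4] = e2`. -/
def br (x y : A41) : A41 := fun i =>
  if i = 0 then x 1 * y 3 - x 3 * y 1
  else if i = 1 then x 2 * y 3 - x 3 * y 2
  else 0

@[simp] theorem br_apply (x y : A41) (i : Fin 4) :
    br x y i = if i = 0 then x 1 * y 3 - x 3 * y 1
      else if i = 1 then x 2 * y 3 - x 3 * y 2 else 0 := rfl

instance : LieRing A41 where
  bracket := br
  add_lie x y z := by funext i; simp [br]; split_ifs <;> ring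
  lie_add x y z := by funext i; simp [br]; split_ifs <;> ring
  lie_self x := by funext i; simp [br]; split_ifs <;> ring
  leibniz_lie x y z := by funext i; simp [br]; split_ifs <;> ring

instance : LieAlgebra ℝ A41 where
  lie_smul c x y := by funext i; show br x (c • y) i = (c • br x y) i; simp [br]; split_ifs <;> ring

/-- Basis vectors `e1, e2, e3, e4` (zero-indexed). -/
def e (i : Fin 4) : A41 := fun j => if j = i then 1 else 0

/-- Dual basis `ε1, ε2, ε3, ε4` (zero-indexed). -/
def eps (i : Fin 4) : Module.Dual ℝ A41 where
  toFun x := x i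
  map_add' _ _ := rfl
  map_smul' _ _ := rfl

end A41

/-!
Since `r` is invertible, `n ∘ r = r ∘ nᵗ` says exactly that the matrix of `n ∘ r` is
skew-symmetric, which cuts the sixteen entries of `n` down to the six-parameter family `nComm`.
Evaluating the concomitant at `(ε1, ε3)` and `(ε1, ε4)` on `e3` kills the two parameters `p, q`,
and the remaining four-parameter family is Nijenhuis with vanishing concomitant.
-/

section

variable {g : Type*} [LieRing g] [LieAlgebra ℝ g]

theorem coad_apply (X : g) (α : Module.Dual ℝ g) (Y : g) : coad X α Y = -α ⁅X, Y⁆ := by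
  simp [coad]

def concomitant (r : Module.Dual ℝ g →ₗ[ℝ] g) (n : g →ₗ[ℝ] g) (α β : Module.Dual ℝ g) :
    Module.Dual ℝ g :=
  coad (r α) (n.dualMap β) - coad (r β) (n.dualMap α)
    - n.dualMap (coad (r α) β) + n.dualMap (coad (r β) α)

end

namespace A41

@[simp] theorem e_apply (i j : Fin 4) : e i j = if j = i then 1 else 0 := rfl
@[simp] theorem eps_apply (i : Fin 4) (x : A41) : eps i x = x i := rfl

theorem lie_eq (x y : A41) :
    ⁅x, y⁆ = (x 1 * y 3 - x 3 * y 1) • e 0 + (x 2 * y 3 - x 3 * y 2) • e 1 := by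
  funext i; fin_cases i <;> simp [show ⁅x, y⁆ = br x y from rfl]

theorem sum_smul_e (x : A41) : ∑ i, x i • e i = x := by
  funext j; fin_cases j <;> simp [Fin.sum_univ_four]

theorem sum_smul_eps (α : Module.Dual ℝ A41) : ∑ i, α (e i) • eps i = α := by
  ext x
  conv_rhs => rw [← sum_smul_e x]
  simp [Fin.sum_univ_four, mul_comm]

theorem linearMap_ext {M : Type*} [AddCommGroup M] [Module ℝ M] {f f' : A41 →ₗ[ℝ] M}
    (h : ∀ i, f (e i) = f' (e i)) : f = f' :=
  LinearMap.ext fun x => by rw [← sum_smul_e x]; simp only [map_sum, map_smul, h]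

theorem dual_linearMap_ext {M : Type*} [AddCommGroup M] [Module ℝ M]
    {f f' : Module.Dual ℝ A41 →ₗ[ℝ] M} (h : ∀ i, f (eps i) = f' (eps i)) : f = f' :=
  LinearMap.ext fun α => by rw [← sum_smul_eps α]; simp only [map_sum, map_smul, h]

def rStd : Module.Dual ℝ A41 →ₗ[ℝ] A41 where
  toFun γ := -γ (e 3) • e 0 + γ (e 2) • e 1 - γ (e 1) • e 2 + γ (e 0) • e 3
  map_add' α β := by simp only [LinearMap.add_apply]; module
  map_smul' c α := by simp only [LinearMap.smul_apply, smul_eq_mul, RingHom.id_apply]; module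

theorem rStd_apply (γ : Module.Dual ℝ A41) :
    rStd γ = -γ (e 3) • e 0 + γ (e 2) • e 1 - γ (e 1) • e 2 + γ (e 0) • e 3 := rfl

theorem eq_rStd {r : Module.Dual ℝ A41 →ₗ[ℝ] A41} (h1 : r (eps 0) = e 3) (h2 : r (eps 1) = -e 2)
    (h3 : r (eps 2) = e 1) (h4 : r (eps 3) = -e 0) : r = rStd := by
  refine dual_linearMap_ext fun i => ?_
  fin_cases i <;> funext j <;> fin_cases j <;> simp [rStd_apply, h1, h2, h3, h4]

def nComm (a b c d p q : ℝ) : A41 →ₗ[ℝ] A41 where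
  toFun x := (a * x 0 - b * x 1 + d * x 2) • e 0 + (p * x 0 + c * x 1 + d * x 3) • e 1 +
    (q * x 0 + c * x 2 + b * x 3) • e 2 + (q * x 1 - p * x 2 + a * x 3) • e 3
  map_add' x y := by simp only [add_apply]; module
  map_smul' t x := by simp only [smul_apply, RingHom.id_apply]; module

theorem nComm_apply (a b c d p q : ℝ) (x : A41) : nComm a b c d p q x =
    (a * x 0 - b * x 1 + d * x 2) • e 0 + (p * x 0 + c * x 1 + d * x 3) • e 1 +
      (q * x 0 + c * x 2 + b * x 3) • e 2 + (q * x 1 - p * x 2 + a * x 3) • e 3 := rfl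

theorem isSkew_rStd : IsSkew rStd := by
  intro α β
  simp only [rStd_apply, map_add, map_sub, map_smul, smul_eq_mul]
  ring

theorem isCYBE_rStd : IsCYBE rStd := by
  intro α β
  funext i
  fin_cases i <;> simp [rStd_apply, sklyanin, coad_apply, lie_eq] <;> ring

theorem isNijenhuis_nComm (a b c d : ℝ) : IsNijenhuis (nComm a b c d 0 0) := by
  intro X Y
  funext i
  fin_cases i <;> simp [nComm_apply, lie_eq] <;> ring


theorem commute_rStd_iff {n : A41 →ₗ[ℝ] A41} :
    (∀ α, n (rStd α) = rStd (n.dualMap α)) ↔ ∃ a b c d p q, n = nComm a b c d p q := by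
  constructor
  · intro h
    have key : ∀ k j, n (rStd (eps k)) j = rStd (n.dualMap (eps k)) j :=
      fun k j => congrFun (h (eps k)) j
    simp [Fin.forall_fin_succ, rStd_apply] at key
    obtain ⟨⟨h30, h31, h32, h33⟩, ⟨-, h21, h22, h23⟩, ⟨-, -, h12, h13⟩, -, -, -, h03⟩ := key
    refine ⟨n (e 0) 0, -n (e 1) 0, n (e 1) 1, n (e 2) 0, n (e 0) 1, n (e 0) 2,
      linearMap_ext fun i => ?_⟩
    fin_cases i <;> funext j <;> fin_cases j <;> simp [nComm_apply] <;> linarith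
  · rintro ⟨a, b, c, d, p, q, rfl⟩ α
    simp [nComm_apply, rStd_apply]
    module

theorem concomitant_nComm_eq_zero_iff (a b c d p q : ℝ) :
    (∀ α β, concomitant rStd (nComm a b c d p q) α β = 0) ↔ p = 0 ∧ q = 0 := by
  constructor
  · intro h
    have hp := LinearMap.congr_fun (h (eps 0) (eps 2)) (e 2)
    have hq := LinearMap.congr_fun (h (eps 0) (eps 3)) (e 2)
    simp [concomitant, coad_apply, lie_eq, rStd_apply, nComm_apply] at hp hq
    exact ⟨hp, hq⟩
  · rintro ⟨rfl, rfl⟩ α β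
    ext Y
    simp [concomitant, coad_apply, lie_eq, rStd_apply, nComm_apply]
    ring

theorem eq_nComm_iff {n : A41 →ₗ[ℝ] A41} {a b c d : ℝ} :
    n = nComm a b c d 0 0 ↔ n (e 0) = a • e 0 ∧ n (e 1) = -b • e 0 + c • e 1 ∧
      n (e 2) = d • e 0 + c • e 2 ∧ n (e 3) = d • e 1 + b • e 2 + a • e 3 := by
  constructor
  · rintro rfl
    refine ⟨?_, ?_, ?_, ?_⟩ <;> funext j <;> fin_cases j <;> simp [nComm_apply]
  · rintro ⟨h0, h1, h2, h3⟩
    refine linearMap_ext fun i => ?_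
    fin_cases i <;> funext j <;> fin_cases j <;> simp [nComm_apply, h0, h1, h2, h3]

end A41

open A41 in
/-- On the Lie algebra `A_{4,1}` with `r` given by `r(ε1) = e4`,
`r(ε2) = -e3`, `r(ε3) = e2`, `r(ε4) = -e1`, a linear endomorphism `n` makes `(r, n)` an
r-n structure iff there are reals `n1, n2, n3, n4` with `n(e1) = n1·e1`,
`n(e2) = -n2·e1 + n3·e2`, `n(e3) = n4·e1 + n3·e3`, `n(e4) = n4·e2 + n2·e3 + n1·e4`. -/
theorem a41_isRN_iff
    (r : Module.Dual ℝ A41 →ₗ[ℝ] A41)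
    (h1 : r (eps 0) = e 3) (h2 : r (eps 1) = -e 2)
    (h3 : r (eps 2) = e 1) (h4 : r (eps 3) = -e 0)
    (n : A41 →ₗ[ℝ] A41) :
    IsRN r n ↔ ∃ n1 n2 n3 n4 : ℝ,
      n (e 0) = n1 • e 0 ∧
      n (e 1) = -n2 • e 0 + n3 • e 1 ∧
      n (e 2) = n4 • e 0 + n3 • e 2 ∧
      n (e 3) = n4 • e 1 + n2 • e 2 + n1 • e 3 := by
  obtain rfl := eq_rStd h1 h2 h3 h4
  simp only [← eq_nComm_iff]
  constructor
  · rintro ⟨-, -, -, hcomm, hconc⟩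
    obtain ⟨a, b, c, d, p, q, rfl⟩ := commute_rStd_iff.1 hcomm
    obtain ⟨rfl, rfl⟩ := (concomitant_nComm_eq_zero_iff a b c d p q).1 hconc
    exact ⟨a, b, c, d, rfl⟩
  · rintro ⟨a, b, c, d, rfl⟩
    exact ⟨isSkew_rStd, isCYBE_rStd, isNijenhuis_nComm a b c d,
      commute_rStd_iff.2 ⟨a, b, c, d, 0, 0, rfl⟩,
      (concomitant_nComm_eq_zero_iff a b c d 0 0).2 ⟨rfl, rfl⟩⟩
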